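/- arXiv:1912.07804 — 2 statements merged into one kernel-verified Lean document; each statement's English description precedes it below -/
import Mathlib

section
/- Let ⟨X, Y, α, φ⟩ be a fair LTLf synthesis problem and let G_φ = (2^{X∪Y}, S, s₀, δ, Acc) be a DFA accepting exactly the nonempty finite traces satisfying φ. Then φ is α-fair realizable if and only if s₀ ∈ Sys_f, where Sys_f is computed over G_φ. -/
namespace LTLfSynth

/-! ### Syntax of LTL / LTLf formulas -/

/-- Syntax of LTL / LTLf formulas over atomic propositions `P`
(with the standard abbreviation `true` included as a constant). -/
inductive Formula (P : Type) : Type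
  | tt : Formula P
  | atom : P → Formula P
  | not : Formula P → Formula P
  | and : Formula P → Formula P → Formula P
  | next : Formula P → Formula P
  | until_ : Formula P → Formula P → Formula P

namespace Formula

/-- LTLf satisfaction at position `i` of a finite trace `ρ` (a list of subsets of `P`). -/
def finSatAt {P : Type} (ρ : List (Set P)) : Formula P → ℕ → Prop
  | tt, _ => True
  | atom a, i => a ∈ ρ.getD i ∅
  | not φ, i => ¬ finSatAt ρ φ i
  | and φ ψ, i => finSatAt ρ φ i ∧ finSatAt ρ ψ i
  | next φ, i => i + 1 < ρ.length ∧ finSatAt ρ φ (i + 1)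
  | until_ φ ψ, i => ∃ j, i ≤ j ∧ j < ρ.length ∧ finSatAt ρ ψ j ∧
      ∀ k, i ≤ k → k < j → finSatAt ρ φ k

/-- `ρ ⊨ φ` for a finite trace. -/
def finSat {P : Type} (ρ : List (Set P)) (φ : Formula P) : Prop := finSatAt ρ φ 0

/-- LTL satisfaction at position `i` of an infinite trace `ρ : ℕ → Set P`. -/
def infSatAt {P : Type} (ρ : ℕ → Set P) : Formula P → ℕ → Prop
  | tt, _ => True
  | atom a, i => a ∈ ρ i
  | not φ, i => ¬ infSatAt ρ φ i
  | and φ ψ, i => infSatAt ρ φ i ∧ infSatAt ρ ψ i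
  | next φ, i => infSatAt ρ φ (i + 1)
  | until_ φ ψ, i => ∃ j, i ≤ j ∧ infSatAt ρ ψ j ∧
      ∀ k, i ≤ k → k < j → infSatAt ρ φ k

/-- `ρ ⊨ φ` for an infinite trace. -/
def infSat {P : Type} (ρ : ℕ → Set P) (φ : Formula P) : Prop := infSatAt ρ φ 0

/-- `F φ = true U φ`. -/
def F {P : Type} (φ : Formula P) : Formula P := until_ tt φ

/-- `G φ = ¬ F ¬ φ`. -/
def G {P : Type} (φ : Formula P) : Formula P := not (F (not φ))

/-- `φ ∨ ψ`. -/
def or {P : Type} (φ ψ : Formula P) : Formula P := not (and (not φ) (not ψ))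

/-- `φ → ψ`. -/
def imp {P : Type} (φ ψ : Formula P) : Formula P := or (not φ) ψ

/-- Atom renaming. -/
def map {P Q : Type} (f : P → Q) : Formula P → Formula Q
  | tt => tt
  | atom a => atom (f a)
  | not φ => not (map f φ)
  | and φ ψ => and (map f φ) (map f ψ)
  | next φ => next (map f φ)
  | until_ φ ψ => until_ (map f φ) (map f ψ)

end Formula

/-! ### The LTLf-to-LTL translation with the fresh atom `alive` (modeled as `none`) -/

/-- The fresh atom `alive` over `P ∪ {alive}`, modeled as `Option P` with `alive = none`. -/
def alive {P : Type} : Formula (Option P) := Formula.atom none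

/-- The translation `t` from LTLf over `P` to LTL over `P ∪ {alive}`. -/
def t {P : Type} : Formula P → Formula (Option P)
  | .tt => .tt
  | .atom a => .atom (some a)
  | .not φ => .not (t φ)
  | .and φ ψ => .and (t φ) (t ψ)
  | .next φ => .next (.and alive (t φ))
  | .until_ φ ψ => .until_ (t φ) (.and alive (t ψ))

/-- `ψ = t(φ) ∧ alive ∧ (alive U G ¬alive)`. -/
def transLTL {P : Type} (φ : Formula P) : Formula (Option P) :=
  .and (t φ) (.and alive (.until_ alive (Formula.G (.not alive))))

/-- Extension equivalence `τ ≈ τ'`: `τ'(i) = τ[i] ∪ {alive}` for `i < |τ|` and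
`τ'(i) = ∅` for `i ≥ |τ|`. -/
def extEquiv {P : Type} (τ : List (Set P)) (τ' : ℕ → Set (Option P)) : Prop :=
  (∀ i, i < τ.length → τ' i = insert none (Option.some '' τ.getD i ∅)) ∧
  (∀ i, τ.length ≤ i → τ' i = ∅)

/-! ### Boolean formulas (environment constraints) -/

/-- Boolean (propositional) formulas over variables `V`. -/
inductive BForm (V : Type) : Type
  | tt : BForm V
  | atom : V → BForm V
  | not : BForm V → BForm V
  | and : BForm V → BForm V → BForm V

namespace BForm

/-- `X ⊨ α` for an assignment `X ⊆ V`. -/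
def eval {V : Type} (X : Set V) : BForm V → Prop
  | tt => True
  | atom v => v ∈ X
  | not b => ¬ eval X b
  | and b c => eval X b ∧ eval X c

/-- View a Boolean formula as a temporal formula, relocating the atoms by `emb`. -/
def toFormula {V P : Type} (emb : V → P) : BForm V → Formula P
  | tt => .tt
  | atom v => .atom (emb v)
  | not b => .not (toFormula emb b)
  | and b c => .and (toFormula emb b) (toFormula emb c)

end BForm

/-! ### Traces, strategies and plays over a DFA arena -/

/-- Combine an environment assignment `X ⊆ Vx` with an agent assignment `Y ⊆ Vy` into
an assignment over `X ∪ Y` (modeled as `Vx ⊕ Vy`). -/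
def combine {Vx Vy : Type} (X : Set Vx) (Y : Set Vy) : Set (Vx ⊕ Vy) :=
  {v | Sum.elim (· ∈ X) (· ∈ Y) v}

/-- The history `[a₀, …, a_{j-1}]` of a sequence. -/
def histList {A : Type} (lam : ℕ → A) (j : ℕ) : List A :=
  (List.range j).map lam

/-- A sequence of environment assignments is `α`-fair if `α` holds infinitely often. -/
def fairSeq {Vx : Type} (α : BForm Vx) (lam : ℕ → Set Vx) : Prop :=
  ∀ n, ∃ j, n ≤ j ∧ α.eval (lam j)

/-- A sequence of environment assignments is `α`-stable if `α` holds at all but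
finitely many positions. -/
def stableSeq {Vx : Type} (α : BForm Vx) (lam : ℕ → Set Vx) : Prop :=
  ∃ n, ∀ j, n ≤ j → α.eval (lam j)

/-- The state visited at round `j` of the play from `s` induced by environment sequence
`lam` and agent strategy `g`. -/
def playState {Vx Vy S : Type} (δ : S → Set (Vx ⊕ Vy) → S) (g : List (Set Vx) → Set Vy)
    (s : S) (lam : ℕ → Set Vx) : ℕ → S
  | 0 => s
  | j + 1 => δ (playState δ g s lam j) (combine (lam j) (g (histList lam (j + 1))))

/-- The state visited at round `j` of the play from `s` in which the environment follows
strategy `h` (so `X_j = h (Y₀, …, Y_{j-1})`) and the agent plays the sequence `mu`. -/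
def envPlayState {Vx Vy S : Type} (δ : S → Set (Vx ⊕ Vy) → S) (h : List (Set Vy) → Set Vx)
    (s : S) (mu : ℕ → Set Vy) : ℕ → S
  | 0 => s
  | j + 1 => δ (envPlayState δ h s mu j) (combine (h (histList mu j)) (mu j))

/-- `s` is an agent winning state of the fair DFA game `⟨G, α⟩`. -/
def agentWinsFairFrom {Vx Vy S : Type} (δ : S → Set (Vx ⊕ Vy) → S) (Acc : Set S)
    (α : BForm Vx) (s : S) : Prop :=
  ∃ g : List (Set Vx) → Set Vy, ∀ lam : ℕ → Set Vx,
    ¬ fairSeq α lam ∨ ∃ j, playState δ g s lam j ∈ Acc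

/-- `s` is an agent winning state of the stable DFA game `⟨G, α⟩`. -/
def agentWinsStableFrom {Vx Vy S : Type} (δ : S → Set (Vx ⊕ Vy) → S) (Acc : Set S)
    (α : BForm Vx) (s : S) : Prop :=
  ∃ g : List (Set Vx) → Set Vy, ∀ lam : ℕ → Set Vx,
    ¬ stableSeq α lam ∨ ∃ j, playState δ g s lam j ∈ Acc

/-- `s` is an environment winning state of the fair DFA game `⟨G, α⟩`. -/
def envWinsFairFrom {Vx Vy S : Type} (δ : S → Set (Vx ⊕ Vy) → S) (Acc : Set S)
    (α : BForm Vx) (s : S) : Prop :=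
  ∃ h : List (Set Vy) → Set Vx, ∀ mu : ℕ → Set Vy,
    fairSeq α (fun j => h (histList mu j)) ∧ ∀ j, envPlayState δ h s mu j ∉ Acc

/-- `s` is an environment winning state of the stable DFA game `⟨G, α⟩`. -/
def envWinsStableFrom {Vx Vy S : Type} (δ : S → Set (Vx ⊕ Vy) → S) (Acc : Set S)
    (α : BForm Vx) (s : S) : Prop :=
  ∃ h : List (Set Vy) → Set Vx, ∀ mu : ℕ → Set Vy,
    stableSeq α (fun j => h (histList mu j)) ∧ ∀ j, envPlayState δ h s mu j ∉ Acc

/-! ### The fixpoint computations -/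

section Fixpoints

variable {Vx Vy S : Type} (δ : S → Set (Vx ⊕ Vy) → S) (Acc : Set S) (α : BForm Vx)

/-- `{s | ∃X ∀Y, (X ⊨ α ∧ δ(s, X∪Y) ∈ A ∖ Acc) ∨ δ(s, X∪Y) ∈ B ∖ Acc}`. -/
def envStep (A B : Set S) : Set S :=
  {s | ∃ X : Set Vx, ∀ Y : Set Vy,
    (α.eval X ∧ δ s (combine X Y) ∈ A \ Acc) ∨ δ s (combine X Y) ∈ B \ Acc}

/-- `{s | ∀X ∃Y, (X ⊭ α ∨ δ(s, X∪Y) ∈ A ∪ Acc) ∧ δ(s, X∪Y) ∈ B ∪ Acc}`. -/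
def sysStep (A B : Set S) : Set S :=
  {s | ∀ X : Set Vx, ∃ Y : Set Vy,
    (¬ α.eval X ∨ δ s (combine X Y) ∈ A ∪ Acc) ∧ δ s (combine X Y) ∈ B ∪ Acc}

lemma envStep_mono {A₁ A₂ B₁ B₂ : Set S} (hA : A₁ ⊆ A₂) (hB : B₁ ⊆ B₂) :
    envStep δ Acc α A₁ B₁ ⊆ envStep δ Acc α A₂ B₂ := by
  rintro s ⟨X, hX⟩
  refine ⟨X, fun Y => ?_⟩
  rcases hX Y with ⟨h1, h2, h3⟩ | ⟨h2, h3⟩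
  · exact Or.inl ⟨h1, hA h2, h3⟩
  · exact Or.inr ⟨hB h2, h3⟩

lemma sysStep_mono {A₁ A₂ B₁ B₂ : Set S} (hA : A₁ ⊆ A₂) (hB : B₁ ⊆ B₂) :
    sysStep δ Acc α A₁ B₁ ⊆ sysStep δ Acc α A₂ B₂ := by
  intro s hs X
  obtain ⟨Y, h1, h2⟩ := hs X
  refine ⟨Y, ?_, ?_⟩
  · rcases h1 with h | h | h
    · exact Or.inl h
    · exact Or.inr (Or.inl (hA h))
    · exact Or.inr (Or.inr h)
  · rcases h2 with h | h
    · exact Or.inl (hB h)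
    · exact Or.inr h

/-- Inner fixpoint operator `Ẑ ↦ envStep Z Ẑ` (for `Env_f`). -/
def envFairInner (Z : Set S) : Set S →o Set S :=
  ⟨fun Zh => envStep δ Acc α Z Zh, fun _ _ h => envStep_mono δ Acc α subset_rfl h⟩

/-- Outer operator `Z ↦ μẐ. envStep Z Ẑ` (for `Env_f`). -/
def envFairOuter : Set S →o Set S :=
  ⟨fun Z => OrderHom.lfp (envFairInner δ Acc α Z),
   fun _ _ h => OrderHom.lfp.monotone fun _ => envStep_mono δ Acc α h subset_rfl⟩

/-- `Env_f = νZ. μẐ. {s | ∃X ∀Y, (X ⊨ α ∧ δ(s,X∪Y) ∈ Z∖Acc) ∨ δ(s,X∪Y) ∈ Ẑ∖Acc}`. -/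
def EnvFair : Set S := OrderHom.gfp (envFairOuter δ Acc α)

/-- Inner fixpoint operator `Ẑ ↦ sysStep Z Ẑ` (for `Sys_f`). -/
def sysFairInner (Z : Set S) : Set S →o Set S :=
  ⟨fun Zh => sysStep δ Acc α Z Zh, fun _ _ h => sysStep_mono δ Acc α subset_rfl h⟩

/-- Outer operator `Z ↦ νẐ. sysStep Z Ẑ` (for `Sys_f`). -/
def sysFairOuter : Set S →o Set S :=
  ⟨fun Z => OrderHom.gfp (sysFairInner δ Acc α Z),
   fun _ _ h => OrderHom.gfp.monotone fun _ => sysStep_mono δ Acc α h subset_rfl⟩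

/-- `Sys_f = μZ. νẐ. {s | ∀X ∃Y, (X ⊭ α ∨ δ(s,X∪Y) ∈ Z∪Acc) ∧ δ(s,X∪Y) ∈ Ẑ∪Acc}`. -/
def SysFair : Set S := OrderHom.lfp (sysFairOuter δ Acc α)

/-- Inner fixpoint operator `Ẑ ↦ envStep Ẑ Z` (for `Env_st`). -/
def envStInner (Z : Set S) : Set S →o Set S :=
  ⟨fun Zh => envStep δ Acc α Zh Z, fun _ _ h => envStep_mono δ Acc α h subset_rfl⟩

/-- Outer operator `Z ↦ νẐ. envStep Ẑ Z` (for `Env_st`). -/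
def envStOuter : Set S →o Set S :=
  ⟨fun Z => OrderHom.gfp (envStInner δ Acc α Z),
   fun _ _ h => OrderHom.gfp.monotone fun _ => envStep_mono δ Acc α subset_rfl h⟩

/-- `Env_st = μZ. νẐ. {s | ∃X ∀Y, (X ⊨ α ∧ δ(s,X∪Y) ∈ Ẑ∖Acc) ∨ δ(s,X∪Y) ∈ Z∖Acc}`. -/
def EnvSt : Set S := OrderHom.lfp (envStOuter δ Acc α)

/-- Inner fixpoint operator `Ẑ ↦ sysStep Ẑ Z` (for `Sys_st`). -/
def sysStInner (Z : Set S) : Set S →o Set S :=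
  ⟨fun Zh => sysStep δ Acc α Zh Z, fun _ _ h => sysStep_mono δ Acc α h subset_rfl⟩

/-- Outer operator `Z ↦ μẐ. sysStep Ẑ Z` (for `Sys_st`). -/
def sysStOuter : Set S →o Set S :=
  ⟨fun Z => OrderHom.lfp (sysStInner δ Acc α Z),
   fun _ _ h => OrderHom.lfp.monotone fun _ => sysStep_mono δ Acc α subset_rfl h⟩

/-- `Sys_st = νZ. μẐ. {s | ∀X ∃Y, (X ⊭ α ∨ δ(s,X∪Y) ∈ Ẑ∪Acc) ∧ δ(s,X∪Y) ∈ Z∪Acc}`. -/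
def SysSt : Set S := OrderHom.gfp (sysStOuter δ Acc α)

end Fixpoints

/-! ### Strategy extraction -/

/-- Approximates `Z₀ = ∅`,
`Z_{i+1} = {s | ∀X ∃Y, (X ⊭ α ∨ δ(s,X∪Y) ∈ Z_i ∪ Acc) ∧ δ(s,X∪Y) ∈ Sys_f ∪ Acc}`. -/
def fairApprox {Vx Vy S : Type} (δ : S → Set (Vx ⊕ Vy) → S) (Acc : Set S) (α : BForm Vx) :
    ℕ → Set S
  | 0 => ∅
  | i + 1 => sysStep δ Acc α (fairApprox δ Acc α i) (SysFair δ Acc α)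

/-- One step of the arena under output function `ω`: `δ(s, X ∪ ω(s, X))`. -/
def stepWith {Vx Vy S : Type} (δ : S → Set (Vx ⊕ Vy) → S) (ω : S → Set Vx → Set Vy)
    (s : S) (X : Set Vx) : S :=
  δ s (combine X (ω s X))

/-- The strategy generated by an output function `ω` from `s₀`:
`g(X₀,…,X_j) = ω(t_j, X_j)` where `t₀ = s₀` and `t_{k+1} = δ(t_k, X_k ∪ ω(t_k, X_k))`. -/
def genStrategy {Vx Vy S : Type} (δ : S → Set (Vx ⊕ Vy) → S) (ω : S → Set Vx → Set Vy)
    (s₀ : S) (l : List (Set Vx)) : Set Vy :=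
  ω (l.dropLast.foldl (stepWith δ ω) s₀) (l.getLast?.getD ∅)

/-- Admissibility of an output function for the fair game: for every `i`, every
non-accepting `s ∈ Z_{i+1} ∖ Z_i` and every `X`, the value `Y = ω(s, X)` satisfies
`(X ⊭ α ∨ δ(s,X∪Y) ∈ Z_i ∪ Acc) ∧ δ(s,X∪Y) ∈ Sys_f ∪ Acc`. -/
def AdmissibleFair {Vx Vy S : Type} (δ : S → Set (Vx ⊕ Vy) → S) (Acc : Set S)
    (α : BForm Vx) (ω : S → Set Vx → Set Vy) : Prop :=
  ∀ i : ℕ, ∀ s ∈ fairApprox δ Acc α (i + 1), s ∉ fairApprox δ Acc α i → s ∉ Acc →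
    ∀ X : Set Vx,
      (¬ α.eval X ∨ stepWith δ ω s X ∈ fairApprox δ Acc α i ∪ Acc) ∧
        stepWith δ ω s X ∈ SysFair δ Acc α ∪ Acc

/-- `W = νZ. {s | ∀X ∃Y, (X ⊭ α ∨ δ(s,X∪Y) ∈ Sys_st ∪ Acc) ∧ δ(s,X∪Y) ∈ Z ∪ Acc}`. -/
def Wst {Vx Vy S : Type} (δ : S → Set (Vx ⊕ Vy) → S) (Acc : Set S) (α : BForm Vx) : Set S :=
  OrderHom.gfp (sysFairInner δ Acc α (SysSt δ Acc α))

/-- Admissibility of an output function for the stable game: for every non-accepting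
`s ∈ W` and every `X`, the value `Y = ω(s, X)` satisfies
`(X ⊭ α ∨ δ(s,X∪Y) ∈ Sys_st ∪ Acc) ∧ δ(s,X∪Y) ∈ W ∪ Acc`. -/
def AdmissibleStable {Vx Vy S : Type} (δ : S → Set (Vx ⊕ Vy) → S) (Acc : Set S)
    (α : BForm Vx) (ω : S → Set Vx → Set Vy) : Prop :=
  ∀ s ∈ Wst δ Acc α, s ∉ Acc → ∀ X : Set Vx,
    (¬ α.eval X ∨ stepWith δ ω s X ∈ SysSt δ Acc α ∪ Acc) ∧
      stepWith δ ω s X ∈ Wst δ Acc α ∪ Acc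

/-! ### Realizability notions -/

/-- The infinite combined trace induced by environment sequence `lam` and agent
strategy `g`: position `i` carries `X_i ∪ g(X₀,…,X_i)`. -/
def inducedTrace {Vx Vy : Type} (g : List (Set Vx) → Set Vy) (lam : ℕ → Set Vx)
    (i : ℕ) : Set (Vx ⊕ Vy) :=
  combine (lam i) (g (histList lam (i + 1)))

/-- The finite trace `ρ^k = (X₀ ∪ g(X₀)), …, (X_k ∪ g(X₀,…,X_k))`. -/
def finPrefix {Vx Vy : Type} (g : List (Set Vx) → Set Vy) (lam : ℕ → Set Vx)
    (k : ℕ) : List (Set (Vx ⊕ Vy)) :=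
  (List.range (k + 1)).map (inducedTrace g lam)

/-- `φ` is `α`-fair realizable. -/
def fairRealizable {Vx Vy : Type} (α : BForm Vx) (φ : Formula (Vx ⊕ Vy)) : Prop :=
  ∃ g : List (Set Vx) → Set Vy, ∀ lam : ℕ → Set Vx,
    fairSeq α lam → ∃ k, Formula.finSat (finPrefix g lam k) φ

/-- `φ` is `α`-stable realizable. -/
def stableRealizable {Vx Vy : Type} (α : BForm Vx) (φ : Formula (Vx ⊕ Vy)) : Prop :=
  ∃ g : List (Set Vx) → Set Vy, ∀ lam : ℕ → Set Vx,
    stableSeq α lam → ∃ k, Formula.finSat (finPrefix g lam k) φ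

/-- `φ` is realizable under the LTL environment assumption `ψA`. -/
def realizableUnder {Vx Vy : Type} (ψA φ : Formula (Vx ⊕ Vy)) : Prop :=
  ∃ g : List (Set Vx) → Set Vy, ∀ lam : ℕ → Set Vx,
    Formula.infSat (inducedTrace g lam) ψA → ∃ k, Formula.finSat (finPrefix g lam k) φ

/-- Combine `X ⊆ Vx` with an agent assignment over `Y ∪ {alive}` (modeled as
`Option Vy`, with `alive = none`) into an assignment over `X ∪ Y ∪ {alive}`. -/
def combineA {Vx Vy : Type} (X : Set Vx) (Y' : Set (Option Vy)) :
    Set (Option (Vx ⊕ Vy)) :=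
  {v | match v with
       | none => none ∈ Y'
       | some (Sum.inl x) => x ∈ X
       | some (Sum.inr y) => some y ∈ Y'}

/-- LTL realizability of `ψ` over `X ∪ Y ∪ {alive}` w.r.t. `⟨X, Y ∪ {alive}⟩`,
where `alive` is controlled by the agent. -/
def ltlRealizable {Vx Vy : Type} (ψ : Formula (Option (Vx ⊕ Vy))) : Prop :=
  ∃ f : List (Set Vx) → Set (Option Vy), ∀ lam : ℕ → Set Vx,
    Formula.infSat (fun i => combineA (lam i) (f (histList lam (i + 1)))) ψ


open OrderHom

section AuxLattice
variable {S : Type}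

lemma myIterate_le_succ (f : Set S →o Set S) : ∀ i, (⇑f)^[i] ∅ ≤ (⇑f)^[i+1] ∅ := by
  intro i
  induction i with
  | zero => simp
  | succ n ih =>
    rw [Function.iterate_succ_apply', Function.iterate_succ_apply']
    exact f.mono ih

lemma myIterate_mono_idx (f : Set S →o Set S) :
    Monotone (fun i => (⇑f)^[i] (∅ : Set S)) :=
  monotone_nat_of_le_succ (myIterate_le_succ f)

lemma myIterate_le_lfp (f : Set S →o Set S) : ∀ i, (⇑f)^[i] ∅ ≤ lfp f := by
  intro i
  induction i with
  | zero => simp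
  | succ n ih =>
    rw [Function.iterate_succ_apply']
    calc f ((⇑f)^[n] ∅) ≤ f (lfp f) := f.mono ih
    _ = lfp f := f.map_lfp

lemma my_lfp_eq_iterate [Fintype S] (f : Set S →o Set S) : ∃ N, lfp f = (⇑f)^[N] ∅ := by
  by_cases h : ∃ N, (⇑f)^[N+1] (∅ : Set S) = (⇑f)^[N] ∅
  · obtain ⟨N, hN⟩ := h
    refine ⟨N, le_antisymm (f.lfp_le ?_) (myIterate_le_lfp f N)⟩
    exact le_of_eq ((Function.iterate_succ_apply' (⇑f) N ∅).symm.trans hN)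
  · exfalso
    push_neg at h
    have hss : ∀ n, (⇑f)^[n] (∅ : Set S) ⊂ (⇑f)^[n+1] ∅ := fun n =>
      HasSubset.Subset.ssubset_of_ne (myIterate_le_succ f n) (Ne.symm (h n))
    have hcard : ∀ n, n ≤ ((⇑f)^[n] (∅ : Set S)).ncard := by
      intro n; induction n with
      | zero => simp
      | succ n ih =>
        have := Set.ncard_lt_ncard (hss n) (Set.toFinite _)
        omega
    have h1 := hcard (Fintype.card S + 1)
    have hle : ((⇑f)^[Fintype.card S + 1] (∅ : Set S)).ncard ≤ Fintype.card S := by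
      have := Set.ncard_le_ncard (Set.subset_univ ((⇑f)^[Fintype.card S + 1] (∅ : Set S)))
        Set.finite_univ
      simpa [Set.ncard_univ, Nat.card_eq_fintype_card] using this
    omega

lemma my_compl_gfp (f g : Set S →o Set S) (hfg : ∀ A, g A = (f Aᶜ)ᶜ) :
    (gfp f)ᶜ = lfp g := by
  have h1 : g ((gfp f)ᶜ) = (gfp f)ᶜ := by rw [hfg, compl_compl, f.map_gfp]
  have h2 : f ((lfp g)ᶜ) = (lfp g)ᶜ := by
    have h := g.map_lfp
    rw [hfg] at h
    have h2 := congrArg compl h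
    simpa using h2
  have h3 : (lfp g)ᶜ ≤ gfp f := f.le_gfp (le_of_eq h2.symm)
  have h4 := compl_le_compl h3
  refine le_antisymm ?_ (g.lfp_le (le_of_eq h1))
  simpa using h4

end AuxLattice

section AuxGame

variable {Vx Vy S : Type}

lemma my_compl_sysStep (δ : S → Set (Vx ⊕ Vy) → S) (Acc : Set S) (α : BForm Vx)
    (Z Zh : Set S) : (sysStep δ Acc α Zᶜ Zhᶜ)ᶜ = envStep δ Acc α Z Zh := by
  ext s
  simp only [sysStep, envStep, Set.mem_compl_iff, Set.mem_setOf_eq, Set.mem_union,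
    Set.mem_diff]
  push_neg
  constructor
  · rintro ⟨X, hX⟩
    exact ⟨X, fun Y => by have := hX Y; tauto⟩
  · rintro ⟨X, hX⟩
    exact ⟨X, fun Y => by have := hX Y; tauto⟩

lemma my_histList_succ {A : Type} (lam : ℕ → A) (j : ℕ) :
    histList lam (j+1) = histList lam j ++ [lam j] := by
  simp [histList, List.range_succ]

lemma my_playState_genStrategy (δ : S → Set (Vx ⊕ Vy) → S)
    (ω : S → Set Vx → Set Vy) (s₀ : S) (lam : ℕ → Set Vx) :
    ∀ j, playState δ (genStrategy δ ω s₀) s₀ lam j =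
      (histList lam j).foldl (stepWith δ ω) s₀ := by
  intro j
  induction j with
  | zero => simp [playState, histList]
  | succ n ih =>
    have hg : genStrategy δ ω s₀ (histList lam (n+1)) =
        ω ((histList lam n).foldl (stepWith δ ω) s₀) (lam n) := by
      rw [my_histList_succ]
      unfold genStrategy
      rw [List.dropLast_concat, List.getLast?_concat]
      rfl
    show δ (playState δ (genStrategy δ ω s₀) s₀ lam n)
        (combine (lam n) (genStrategy δ ω s₀ (histList lam (n+1)))) = _
    rw [ih, hg, my_histList_succ, List.foldl_append]
    rfl

lemma my_foldl_playState (δ : S → Set (Vx ⊕ Vy) → S)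
    (g : List (Set Vx) → Set Vy) (s₀ : S) (lam : ℕ → Set Vx) :
    ∀ n, ((List.range n).map (inducedTrace g lam)).foldl δ s₀ = playState δ g s₀ lam n := by
  intro n
  induction n with
  | zero => simp [playState]
  | succ n ih =>
    rw [List.range_succ, List.map_append, List.foldl_append, ih]
    rfl

lemma sysFair_sound [Fintype S] (δ : S → Set (Vx ⊕ Vy) → S)
    (Acc : Set S) (α : BForm Vx) (s₀ : S) (h₀ : s₀ ∈ SysFair δ Acc α) :
    ∃ g : List (Set Vx) → Set Vy, ∀ lam : ℕ → Set Vx, fairSeq α lam →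
      ∃ j, playState δ g s₀ lam j ∈ Acc := by
  classical
  set F := sysFairOuter δ Acc α with hF
  set Zi : ℕ → Set S := fun i => (⇑F)^[i] ∅ with hZi
  have hchain : Monotone Zi := myIterate_mono_idx F
  obtain ⟨N, hNe⟩ := my_lfp_eq_iterate F
  have hSys : SysFair δ Acc α = Zi N := hNe
  have hZle : ∀ i, Zi i ⊆ SysFair δ Acc α := fun i => myIterate_le_lfp F i
  have hfix : ∀ i, Zi (i+1) = sysStep δ Acc α (Zi i) (Zi (i+1)) := by
    intro i
    have h1 : Zi (i+1) = F (Zi i) := Function.iterate_succ_apply' (⇑F) i ∅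
    have h2 : sysFairInner δ Acc α (Zi i) (OrderHom.gfp (sysFairInner δ Acc α (Zi i))) =
        OrderHom.gfp (sysFairInner δ Acc α (Zi i)) := OrderHom.map_gfp _
    rw [h1]
    exact h2.symm
  have hmin : ∀ s, ∃ m, s ∈ SysFair δ Acc α → (s ∈ Zi m ∧ ∀ j, s ∈ Zi j → m ≤ j) := by
    intro s
    by_cases hs : s ∈ SysFair δ Acc α
    · have hex : ∃ i, s ∈ Zi i := ⟨N, by rwa [← hSys]⟩
      exact ⟨Nat.find hex, fun _ => ⟨Nat.find_spec hex, fun j hj => Nat.find_le hj⟩⟩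
    · exact ⟨0, fun h => absurd h hs⟩
  choose ms hms using hmin
  have hms1 : ∀ s, s ∈ SysFair δ Acc α → 1 ≤ ms s := by
    intro s hs
    rcases Nat.eq_zero_or_pos (ms s) with h | h
    · exfalso
      have h1 := (hms s hs).1
      rw [h] at h1
      exact h1
    · exact h
  have hstep : ∀ s X, ∃ Y, s ∈ SysFair δ Acc α → s ∉ Acc →
      ((¬ α.eval X ∨ δ s (combine X Y) ∈ Zi (ms s - 1) ∪ Acc) ∧
        δ s (combine X Y) ∈ Zi (ms s) ∪ Acc) := by
    intro s X
    by_cases hs : s ∈ SysFair δ Acc α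
    · by_cases ha : s ∈ Acc
      · exact ⟨∅, fun _ h => absurd ha h⟩
      · have h1 : s ∈ Zi (ms s) := (hms s hs).1
        have h2 : ms s - 1 + 1 = ms s := Nat.succ_pred_eq_of_pos (hms1 s hs)
        have h3 : s ∈ sysStep δ Acc α (Zi (ms s - 1)) (Zi (ms s - 1 + 1)) := by
          rw [← hfix, h2]; exact h1
        rw [h2] at h3
        obtain ⟨Y, hY⟩ := h3 X
        exact ⟨Y, fun _ _ => hY⟩
    · exact ⟨∅, fun h => absurd h hs⟩
  choose ω hω using hstep
  have Q : ∀ i s, s ∈ Zi (i+1) → s ∉ Acc → ∀ X,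
      (¬ α.eval X ∨ stepWith δ ω s X ∈ Zi i ∪ Acc) ∧
        stepWith δ ω s X ∈ Zi (i+1) ∪ Acc := by
    intro i s hs hacc X
    have hsS : s ∈ SysFair δ Acc α := hZle _ hs
    have hmle : ms s ≤ i + 1 := (hms s hsS).2 _ hs
    have h1 : ms s - 1 ≤ i := by omega
    obtain ⟨hA, hB⟩ := hω s X hsS hacc
    constructor
    · rcases hA with h | h
      · exact Or.inl h
      · rcases h with h | h
        · exact Or.inr (Or.inl (hchain h1 h))
        · exact Or.inr (Or.inr h)
    · rcases hB with h | h
      · exact Or.inl (hchain hmle h)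
      · exact Or.inr h
  refine ⟨genStrategy δ ω s₀, ?_⟩
  intro lam hfair
  by_contra hno
  push_neg at hno
  set σ : ℕ → S := fun j => (histList lam j).foldl (stepWith δ ω) s₀ with hσ
  have hplay : ∀ j, playState δ (genStrategy δ ω s₀) s₀ lam j = σ j :=
    my_playState_genStrategy δ ω s₀ lam
  have hnAcc : ∀ j, σ j ∉ Acc := fun j => by rw [← hplay]; exact hno j
  have hstepσ : ∀ j, σ (j+1) = stepWith δ ω (σ j) (lam j) := by
    intro j
    show (histList lam (j+1)).foldl (stepWith δ ω) s₀ = _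
    rw [my_histList_succ, List.foldl_append]
    rfl
  have key : ∀ i, ∀ j0, σ j0 ∈ Zi i → False := by
    intro i
    induction i with
    | zero => intro j0 h; exact h
    | succ i ih =>
      intro j0 hj0
      have hall : ∀ d, σ (j0 + d) ∈ Zi (i+1) := by
        intro d
        induction d with
        | zero => simpa using hj0
        | succ d ihd =>
          have hQ := (Q i (σ (j0+d)) ihd (hnAcc _) (lam (j0+d))).2
          rw [← hstepσ] at hQ
          rw [show j0 + (d+1) = (j0+d)+1 from rfl]
          rcases hQ with h | h
          · exact h
          · exact absurd h (hnAcc _)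
      obtain ⟨j1, hj1, hαj1⟩ := hfair j0
      have hj1' : σ j1 ∈ Zi (i+1) := by
        obtain ⟨d, rfl⟩ := Nat.exists_eq_add_of_le hj1
        exact hall d
      have hQ := (Q i (σ j1) hj1' (hnAcc j1) (lam j1)).1
      rcases hQ with h | h
      · exact h hαj1
      · rw [← hstepσ] at h
        rcases h with h | h
        · exact ih (j1+1) h
        · exact absurd h (hnAcc _)
  have h0 : σ 0 ∈ Zi N := by
    have : σ 0 = s₀ := by simp [hσ, histList]
    rw [this, ← hSys]; exact h₀
  exact key N 0 h0

lemma sysFair_complete [Fintype S] (δ : S → Set (Vx ⊕ Vy) → S)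
    (Acc : Set S) (α : BForm Vx) (s₀ : S) (h₀ : s₀ ∉ SysFair δ Acc α)
    (g : List (Set Vx) → Set Vy) :
    ∃ lam : ℕ → Set Vx, fairSeq α lam ∧ ∀ j, playState δ g s₀ lam (j+1) ∉ Acc := by
  classical
  set C : Set S := (SysFair δ Acc α)ᶜ with hCdef
  have hSysfix : SysFair δ Acc α =
      OrderHom.gfp (sysFairInner δ Acc α (SysFair δ Acc α)) :=
    (OrderHom.map_lfp (sysFairOuter δ Acc α)).symm
  set E : Set S →o Set S :=
    ⟨fun Zh => envStep δ Acc α C Zh, fun _ _ h => envStep_mono δ Acc α subset_rfl h⟩ with hEdef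
  have hdual : C = OrderHom.lfp E := by
    rw [hCdef, hSysfix]
    refine my_compl_gfp _ _ ?_
    intro A
    show envStep δ Acc α C A = (sysStep δ Acc α (SysFair δ Acc α) Aᶜ)ᶜ
    rw [← my_compl_sysStep δ Acc α C A, hCdef, compl_compl]
  set Ei : ℕ → Set S := fun i => (⇑E)^[i] ∅ with hEi
  have hEle : ∀ i, Ei i ⊆ C := by
    intro i
    rw [hdual]
    exact myIterate_le_lfp E i
  obtain ⟨N, hN⟩ := my_lfp_eq_iterate E
  have hCN : C = Ei N := by rw [hdual, hN]
  have hEfix : ∀ i, Ei (i+1) = envStep δ Acc α C (Ei i) := fun i =>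
    Function.iterate_succ_apply' (⇑E) i ∅
  have hmin : ∀ s, ∃ m, s ∈ C → (s ∈ Ei m ∧ ∀ j, s ∈ Ei j → m ≤ j) := by
    intro s
    by_cases hs : s ∈ C
    · have hex : ∃ i, s ∈ Ei i := ⟨N, by rwa [← hCN]⟩
      exact ⟨Nat.find hex, fun _ => ⟨Nat.find_spec hex, fun j hj => Nat.find_le hj⟩⟩
    · exact ⟨0, fun h => absurd h hs⟩
  choose ms hms using hmin
  have hms1 : ∀ s, s ∈ C → 1 ≤ ms s := by
    intro s hs
    rcases Nat.eq_zero_or_pos (ms s) with h | h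
    · exfalso
      have h1 := (hms s hs).1
      rw [h] at h1
      exact h1
    · exact h
  have hmove : ∀ s, ∃ X, s ∈ C → ∀ Y : Set Vy,
      (α.eval X ∧ δ s (combine X Y) ∈ C \ Acc) ∨
        δ s (combine X Y) ∈ Ei (ms s - 1) \ Acc := by
    intro s
    by_cases hs : s ∈ C
    · have h1 : s ∈ Ei (ms s) := (hms s hs).1
      have h2 : ms s - 1 + 1 = ms s := Nat.succ_pred_eq_of_pos (hms1 s hs)
      have h3 : s ∈ envStep δ Acc α C (Ei (ms s - 1)) := by
        rw [← hEfix, h2]; exact h1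
      obtain ⟨X, hX⟩ := h3
      exact ⟨X, fun _ => hX⟩
    · exact ⟨∅, fun h => absurd h hs⟩
  choose Xc hXc using hmove
  let aux : ℕ → List (Set Vx) × S := fun j => Nat.rec (([], s₀)) (fun _ p =>
    (p.1 ++ [Xc p.2], δ p.2 (combine (Xc p.2) (g (p.1 ++ [Xc p.2]))))) j
  set σ : ℕ → S := fun j => (aux j).2 with hσ
  set lam : ℕ → Set Vx := fun j => Xc (σ j) with hlam
  have haux1 : ∀ j, (aux j).1 = histList lam j := by
    intro j
    induction j with
    | zero => rfl
    | succ n ih =>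
      show (aux n).1 ++ [Xc (aux n).2] = histList lam (n+1)
      rw [my_histList_succ, ih]
  have hstepσ : ∀ j, σ (j+1) = δ (σ j) (combine (lam j) (g (histList lam (j+1)))) := by
    intro j
    show δ (aux j).2 (combine (Xc (aux j).2) (g ((aux j).1 ++ [Xc (aux j).2]))) = _
    rw [show (aux j).1 ++ [Xc (aux j).2] = histList lam (j+1) from
      (my_histList_succ lam j ▸ (haux1 j ▸ rfl) : _)]
  have hplay : ∀ j, playState δ g s₀ lam j = σ j := by
    intro j
    induction j with
    | zero => rfl
    | succ n ih =>
      show δ (playState δ g s₀ lam n) (combine (lam n) (g (histList lam (n+1)))) = σ (n+1)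
      rw [ih, hstepσ]
  have hXc' : ∀ j, σ j ∈ C →
      (α.eval (lam j) ∧ σ (j+1) ∈ C \ Acc) ∨ σ (j+1) ∈ Ei (ms (σ j) - 1) \ Acc := by
    intro j hj
    have h := hXc (σ j) hj (g (histList lam (j+1)))
    rw [← hstepσ j] at h
    exact h
  have hinv : ∀ j, σ j ∈ C := by
    intro j
    induction j with
    | zero => exact h₀
    | succ n ih =>
      rcases hXc' n ih with ⟨_, h⟩ | h
      · exact h.1
      · exact hEle _ h.1
  have hnAcc : ∀ j, σ (j+1) ∉ Acc := by
    intro j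
    rcases hXc' j (hinv j) with ⟨_, h⟩ | h
    · exact h.2
    · exact h.2
  refine ⟨lam, ?_, fun j => by rw [hplay]; exact hnAcc j⟩
  intro n
  by_contra hbad
  push_neg at hbad
  have hdec : ∀ j, n ≤ j → ms (σ (j+1)) < ms (σ j) := by
    intro j hj
    rcases hXc' j (hinv j) with ⟨ha, _⟩ | h
    · exact absurd ha (hbad j hj)
    · have hle := (hms (σ (j+1)) (hinv (j+1))).2 _ h.1
      have h1 := hms1 (σ j) (hinv j)
      omega
  have hmono : ∀ d, ms (σ (n + d)) + d ≤ ms (σ n) := by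
    intro d
    induction d with
    | zero => simp
    | succ d ih =>
      have h := hdec (n + d) (Nat.le_add_right n d)
      rw [show n + (d+1) = (n+d)+1 from rfl]
      omega
  have h1 := hmono (ms (σ n))
  have h2 := hms1 (σ (n + ms (σ n))) (hinv _)
  omega

end AuxGame


end LTLfSynth
open LTLfSynth in
/-- The fair LTLf synthesis problem `⟨X, Y, α, φ⟩` is realizable iff
`s₀ ∈ Sys_f`, where `Sys_f` is computed over the DFA `G_φ` of `φ`. -/
theorem fair_synthesis_iff_mem_sysFair {Vx Vy S : Type} [Fintype Vx] [Fintype Vy] [Fintype S]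
    (α : BForm Vx) (φ : Formula (Vx ⊕ Vy))
    (s₀ : S) (δ : S → Set (Vx ⊕ Vy) → S) (Acc : Set S)
    (hDFA : ∀ w : List (Set (Vx ⊕ Vy)), w.foldl δ s₀ ∈ Acc ↔ w ≠ [] ∧ Formula.finSat w φ) :
    fairRealizable α φ ↔ s₀ ∈ SysFair δ Acc α := by
  have hs₀ : s₀ ∉ Acc := fun hA => ((hDFA []).mp hA).1 rfl
  constructor
  · rintro ⟨g, hg⟩
    by_contra hC
    obtain ⟨lam, hfair, hnAcc⟩ := sysFair_complete δ Acc α s₀ hC g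
    obtain ⟨k, hk⟩ := hg lam hfair
    have hmem : (finPrefix g lam k).foldl δ s₀ ∈ Acc :=
      (hDFA _).mpr ⟨by simp [finPrefix], hk⟩
    rw [show finPrefix g lam k = (List.range (k+1)).map (inducedTrace g lam) from rfl,
      my_foldl_playState] at hmem
    exact hnAcc k hmem
  · intro h
    obtain ⟨g, hg⟩ := sysFair_sound δ Acc α s₀ h
    refine ⟨g, fun lam hfair => ?_⟩
    obtain ⟨j, hj⟩ := hg lam hfair
    match j, hj with
    | 0, hj => exact absurd hj hs₀
    | k+1, hj =>
      refine ⟨k, ?_⟩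
      have hmem : (finPrefix g lam k).foldl δ s₀ ∈ Acc := by
        rw [show finPrefix g lam k = (List.range (k+1)).map (inducedTrace g lam) from rfl,
          my_foldl_playState]
        exact hj
      exact ((hDFA _).mp hmem).2
end

section
/- Let ⟨X, Y, α, φ⟩ be a stable LTLf synthesis problem and let G_φ = (2^{X∪Y}, S, s₀, δ, Acc) be a DFA accepting exactly the nonempty finite traces satisfying φ. Then φ is α-stable realizable if and only if s₀ ∈ Sys_st, where Sys_st is computed over G_φ. -/
namespace LTLfSynthAux

open LTLfSynth

section Lattice
variable {S : Type}

/-- Iterates of a monotone set operator starting from `∅`. -/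
def iter (f : Set S →o Set S) : ℕ → Set S
  | 0 => ∅
  | n + 1 => f (iter f n)

lemma iter_le_lfp (f : Set S →o Set S) : ∀ n, iter f n ≤ OrderHom.lfp f
  | 0 => bot_le
  | n + 1 => by
      conv_rhs => rw [← OrderHom.map_lfp f]
      exact f.mono (iter_le_lfp f n)

lemma iter_mono_step (f : Set S →o Set S) : ∀ n, iter f n ≤ iter f (n + 1)
  | 0 => bot_le
  | n + 1 => f.mono (iter_mono_step f n)

lemma exists_iter_eq_lfp [Fintype S] (f : Set S →o Set S) :
    ∃ n, iter f n = OrderHom.lfp f := by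
  have hstab : ∃ n, iter f (n + 1) = iter f n := by
    by_contra h
    push_neg at h
    have hcard : ∀ n, n ≤ (iter f n).ncard := by
      intro n
      induction n with
      | zero => exact Nat.zero_le _
      | succ n ih =>
        have hss : iter f n ⊂ iter f (n + 1) :=
          lt_of_le_of_ne (iter_mono_step f n) (fun he => h n he.symm)
        have := Set.ncard_lt_ncard hss (Set.toFinite _)
        omega
    have h1 := hcard (Fintype.card S + 1)
    have h2 : (iter f (Fintype.card S + 1)).ncard ≤ Fintype.card S := by
      have := Set.ncard_le_ncard (Set.subset_univ (iter f (Fintype.card S + 1)))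
        (Set.toFinite _)
      rwa [Set.ncard_univ, Nat.card_eq_fintype_card] at this
    omega
  obtain ⟨n, hn⟩ := hstab
  refine ⟨n, le_antisymm (iter_le_lfp f n) (OrderHom.lfp_le f hn.le)⟩

lemma compl_lfp_gfp (f g : Set S →o Set S) (h : ∀ A, (g A)ᶜ = f Aᶜ) :
    (OrderHom.lfp g)ᶜ = OrderHom.gfp f ∧ (OrderHom.gfp g)ᶜ = OrderHom.lfp f := by
  have hg : ∀ A, g A = (f Aᶜ)ᶜ := by
    intro A
    rw [← h A, compl_compl]
  constructor
  · apply le_antisymm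
    · apply OrderHom.le_gfp
      rw [← h, OrderHom.map_lfp]
    · rw [← compl_compl (OrderHom.gfp f)]
      apply compl_le_compl
      apply OrderHom.lfp_le
      rw [hg, compl_compl, OrderHom.map_gfp]
  · apply le_antisymm
    · rw [← compl_compl (OrderHom.lfp f)]
      apply compl_le_compl
      apply OrderHom.le_gfp
      rw [hg, compl_compl, OrderHom.map_lfp]
    · apply OrderHom.lfp_le
      rw [← h, OrderHom.map_gfp]

end Lattice

section Game

variable {Vx Vy S : Type} (δ : S → Set (Vx ⊕ Vy) → S) (Acc : Set S) (α : BForm Vx)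

lemma compl_sysStep (A B : Set S) :
    (sysStep δ Acc α A B)ᶜ = envStep δ Acc α Aᶜ Bᶜ := by
  ext s
  simp only [sysStep, envStep, Set.mem_compl_iff, Set.mem_setOf_eq, Set.mem_union,
    Set.mem_diff, not_forall]
  constructor
  · rintro ⟨X, hX⟩
    rw [not_exists] at hX
    refine ⟨X, fun Y => ?_⟩
    have := hX Y
    tauto
  · rintro ⟨X, hX⟩
    refine ⟨X, ?_⟩
    rw [not_exists]
    intro Y
    have := hX Y
    tauto

lemma compl_sysStOuter (A : Set S) :
    (sysStOuter δ Acc α A)ᶜ = envStOuter δ Acc α Aᶜ :=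
  (compl_lfp_gfp (envStInner δ Acc α Aᶜ) (sysStInner δ Acc α A)
    (fun B => compl_sysStep δ Acc α B A)).1

lemma compl_SysSt : (SysSt δ Acc α)ᶜ = EnvSt δ Acc α :=
  (compl_lfp_gfp (envStOuter δ Acc α) (sysStOuter δ Acc α)
    (fun A => compl_sysStOuter δ Acc α A)).2

lemma lfp_inner_SysSt :
    OrderHom.lfp (sysStInner δ Acc α (SysSt δ Acc α)) = SysSt δ Acc α :=
  OrderHom.map_gfp (sysStOuter δ Acc α)

lemma iter_inner_succ (Z : Set S) (m : ℕ) :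
    iter (sysStInner δ Acc α Z) (m + 1) =
      sysStep δ Acc α (iter (sysStInner δ Acc α Z) m) Z := rfl

lemma iter_env_succ (m : ℕ) :
    iter (envStOuter δ Acc α) (m + 1) =
      envStep δ Acc α (iter (envStOuter δ Acc α) (m + 1))
        (iter (envStOuter δ Acc α) m) := by
  have h : iter (envStOuter δ Acc α) (m + 1) =
      OrderHom.gfp (envStInner δ Acc α (iter (envStOuter δ Acc α) m)) := rfl
  rw [h]
  exact (OrderHom.map_gfp (envStInner δ Acc α (iter (envStOuter δ Acc α) m))).symm

lemma lfp_env : OrderHom.lfp (envStOuter δ Acc α) = EnvSt δ Acc α := rfl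

end Game

section Traces

variable {Vx Vy S : Type} (δ : S → Set (Vx ⊕ Vy) → S)

lemma histList_succ {A : Type} (lam : ℕ → A) (j : ℕ) :
    histList lam (j + 1) = histList lam j ++ [lam j] := by
  simp [histList, List.range_succ]

lemma playState_eq_foldl (g : List (Set Vx) → Set Vy) (s₀ : S) (lam : ℕ → Set Vx) :
    ∀ j, playState δ g s₀ lam j = (histList (inducedTrace g lam) j).foldl δ s₀
  | 0 => rfl
  | j + 1 => by
      rw [histList_succ, List.foldl_append]
      show δ (playState δ g s₀ lam j) _ = _
      rw [playState_eq_foldl g s₀ lam j]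
      rfl

lemma playState_genStrategy (ω : S → Set Vx → Set Vy) (s₀ : S) (lam : ℕ → Set Vx) :
    ∀ j, playState δ (genStrategy δ ω s₀) s₀ lam j =
      (histList lam j).foldl (stepWith δ ω) s₀
  | 0 => rfl
  | j + 1 => by
      have hg : genStrategy δ ω s₀ (histList lam (j + 1)) =
          ω ((histList lam j).foldl (stepWith δ ω) s₀) (lam j) := by
        rw [genStrategy, histList_succ, List.dropLast_concat, List.getLast?_concat]
        rfl
      show δ (playState δ (genStrategy δ ω s₀) s₀ lam j)
          (combine (lam j) (genStrategy δ ω s₀ (histList lam (j + 1)))) = _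
      rw [playState_genStrategy ω s₀ lam j, hg, histList_succ, List.foldl_append]
      rfl

end Traces

end LTLfSynthAux

open LTLfSynth in
/-- The stable LTLf synthesis problem `⟨X, Y, α, φ⟩` is realizable iff
`s₀ ∈ Sys_st`, where `Sys_st` is computed over the DFA `G_φ` of `φ`. -/
theorem stable_synthesis_iff_mem_sysSt {Vx Vy S : Type} [Fintype Vx] [Fintype Vy] [Fintype S]
    (α : BForm Vx) (φ : Formula (Vx ⊕ Vy))
    (s₀ : S) (δ : S → Set (Vx ⊕ Vy) → S) (Acc : Set S)
    (hDFA : ∀ w : List (Set (Vx ⊕ Vy)), w.foldl δ s₀ ∈ Acc ↔ w ≠ [] ∧ Formula.finSat w φ) :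
    stableRealizable α φ ↔ s₀ ∈ SysSt δ Acc α := by
  classical
  have hs₀Acc : s₀ ∉ Acc := by
    have h := hDFA []
    simp at h
    exact h
  have hfin : ∀ (g : List (Set Vx) → Set Vy) (lam : ℕ → Set Vx) (k : ℕ),
      Formula.finSat (finPrefix g lam k) φ ↔ playState δ g s₀ lam (k + 1) ∈ Acc := by
    intro g lam k
    have hne : finPrefix g lam k ≠ [] := by
      have hlen : (finPrefix g lam k).length = k + 1 := by
        simp [finPrefix]
      intro h
      rw [h] at hlen
      simp at hlen
    have heq : finPrefix g lam k = histList (inducedTrace g lam) (k + 1) := rfl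
    rw [LTLfSynthAux.playState_eq_foldl, ← heq, hDFA]
    tauto
  constructor
  · -- realizable → s₀ ∈ SysSt
    intro hreal
    by_contra hmem
    have hEnv : s₀ ∈ EnvSt δ Acc α := by
      rw [← LTLfSynthAux.compl_SysSt δ Acc α]
      exact hmem
    obtain ⟨g, hg⟩ := hreal
    obtain ⟨N, hNW⟩ := LTLfSynthAux.exists_iter_eq_lfp (envStOuter δ Acc α)
    rw [LTLfSynthAux.lfp_env] at hNW
    set rk : S → ℕ := fun s => sInf {i | s ∈ LTLfSynthAux.iter (envStOuter δ Acc α) i}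
      with hrk
    have hmemIter : ∀ s, s ∈ EnvSt δ Acc α →
        s ∈ LTLfSynthAux.iter (envStOuter δ Acc α) (rk s) ∧ 1 ≤ rk s := by
      intro s hs
      have hne : {i | s ∈ LTLfSynthAux.iter (envStOuter δ Acc α) i}.Nonempty :=
        ⟨N, by rw [Set.mem_setOf_eq, hNW]; exact hs⟩
      have h1 : s ∈ LTLfSynthAux.iter (envStOuter δ Acc α) (rk s) := Nat.sInf_mem hne
      refine ⟨h1, ?_⟩
      rcases Nat.eq_zero_or_pos (rk s) with h0 | hpos
      · rw [h0] at h1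
        simp only [LTLfSynthAux.iter] at h1
        exact absurd h1 (Set.notMem_empty s)
      · exact hpos
    have hstep : ∀ s, ∃ X, s ∈ EnvSt δ Acc α → ∀ Y,
        (α.eval X ∧ δ s (combine X Y) ∈
            LTLfSynthAux.iter (envStOuter δ Acc α) (rk s) \ Acc) ∨
          δ s (combine X Y) ∈
            LTLfSynthAux.iter (envStOuter δ Acc α) (rk s - 1) \ Acc := by
      intro s
      by_cases hs : s ∈ EnvSt δ Acc α
      · obtain ⟨h1, h2⟩ := hmemIter s hs
        have hkey := LTLfSynthAux.iter_env_succ δ Acc α (rk s - 1)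
        rw [Nat.sub_add_cancel h2] at hkey
        rw [hkey] at h1
        obtain ⟨X, hX⟩ := h1
        exact ⟨X, fun _ Y => hX Y⟩
      · exact ⟨∅, fun h => absurd h hs⟩
    choose ξ hξ using hstep
    -- construct the environment sequence against g
    set step : S × List (Set Vx) → S × List (Set Vx) :=
      fun p => (δ p.1 (combine (ξ p.1) (g (p.2 ++ [ξ p.1]))), p.2 ++ [ξ p.1]) with hstepdef
    set aux : ℕ → S × List (Set Vx) :=
      fun n => Nat.rec (s₀, ([] : List (Set Vx))) (fun _ p => step p) n with haux
    set lam : ℕ → Set Vx := fun j => ξ (aux j).1 with hlam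
    have hauxS : ∀ j, aux (j + 1) = step (aux j) := fun j => rfl
    have hhist : ∀ j, (aux j).2 = histList lam j := by
      intro j
      induction j with
      | zero => rfl
      | succ j ih =>
        rw [hauxS, LTLfSynthAux.histList_succ, ← ih]
    have hplay : ∀ j, playState δ g s₀ lam j = (aux j).1 := by
      intro j
      induction j with
      | zero => rfl
      | succ j ih =>
        show δ (playState δ g s₀ lam j)
            (combine (lam j) (g (histList lam (j + 1)))) = _
        rw [ih, hauxS, LTLfSynthAux.histList_succ, ← hhist j]
    have hkey : ∀ j, (aux j).1 ∈ EnvSt δ Acc α →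
        (aux (j + 1)).1 ∈ EnvSt δ Acc α ∧ (aux (j + 1)).1 ∉ Acc ∧
          rk ((aux (j + 1)).1) ≤ rk ((aux j).1) ∧
          (¬ α.eval (lam j) → rk ((aux (j + 1)).1) < rk ((aux j).1)) := by
      intro j hj
      have hs' := hξ (aux j).1 hj (g ((aux j).2 ++ [ξ (aux j).1]))
      have heq : (aux (j + 1)).1 =
          δ (aux j).1 (combine (ξ (aux j).1) (g ((aux j).2 ++ [ξ (aux j).1]))) := rfl
      rw [← heq] at hs'
      have hWsub : ∀ k, LTLfSynthAux.iter (envStOuter δ Acc α) k ⊆ EnvSt δ Acc α := by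
        intro k
        rw [← LTLfSynthAux.lfp_env]
        exact LTLfSynthAux.iter_le_lfp (envStOuter δ Acc α) k
      have hge1 := (hmemIter _ hj).2
      have hlamj : α.eval (lam j) = α.eval (ξ (aux j).1) := rfl
      rcases hs' with ⟨ha, hm, hnacc⟩ | ⟨hm, hnacc⟩
      · have hle : rk ((aux (j + 1)).1) ≤ rk ((aux j).1) := Nat.sInf_le hm
        refine ⟨hWsub _ hm, hnacc, hle, fun hna => absurd (hlamj ▸ ha) hna⟩
      · have hle : rk ((aux (j + 1)).1) ≤ rk ((aux j).1) - 1 := Nat.sInf_le hm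
        exact ⟨hWsub _ hm, hnacc, by omega, fun _ => by omega⟩
    have hInv : ∀ j, (aux j).1 ∈ EnvSt δ Acc α := by
      intro j
      induction j with
      | zero => exact hEnv
      | succ j ih => exact (hkey j ih).1
    have hnAcc : ∀ j, (aux j).1 ∉ Acc := by
      intro j
      cases j with
      | zero => exact hs₀Acc
      | succ j => exact (hkey j (hInv j)).2.1
    have hmono : ∀ a b, a ≤ b → rk ((aux b).1) ≤ rk ((aux a).1) := by
      intro a b hab
      induction b, hab using Nat.le_induction with
      | base => exact le_rfl
      | succ b hb ih => exact le_trans (hkey b (hInv b)).2.2.1 ih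
    have hne : (Set.range (fun j => rk ((aux j).1))).Nonempty := ⟨_, ⟨0, rfl⟩⟩
    obtain ⟨n, hn⟩ := Nat.sInf_mem hne
    have hn' : rk ((aux n).1) = sInf (Set.range (fun j => rk ((aux j).1))) := hn
    have hstable : stableSeq α lam := by
      refine ⟨n, fun j hj => ?_⟩
      by_contra hna
      have hlt := (hkey j (hInv j)).2.2.2 hna
      have h1 : rk ((aux j).1) ≤ rk ((aux n).1) := hmono n j hj
      have h2 : sInf (Set.range (fun j => rk ((aux j).1))) ≤ rk ((aux (j + 1)).1) :=
        Nat.sInf_le ⟨j + 1, rfl⟩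
      omega
    obtain ⟨k, hk⟩ := hg lam hstable
    have hAccK := (hfin g lam k).mp hk
    rw [hplay (k + 1)] at hAccK
    exact hnAcc (k + 1) hAccK
  · -- s₀ ∈ SysSt → realizable
    intro hmem
    obtain ⟨N, hN⟩ :=
      LTLfSynthAux.exists_iter_eq_lfp (sysStInner δ Acc α (SysSt δ Acc α))
    rw [LTLfSynthAux.lfp_inner_SysSt] at hN
    set rk : S → ℕ :=
      fun s => sInf {i | s ∈ LTLfSynthAux.iter (sysStInner δ Acc α (SysSt δ Acc α)) i}
      with hrk
    have hmemIter : ∀ s, s ∈ SysSt δ Acc α →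
        s ∈ LTLfSynthAux.iter (sysStInner δ Acc α (SysSt δ Acc α)) (rk s) ∧
          1 ≤ rk s := by
      intro s hs
      have hne : {i | s ∈ LTLfSynthAux.iter (sysStInner δ Acc α (SysSt δ Acc α)) i}.Nonempty :=
        ⟨N, by rw [Set.mem_setOf_eq, hN]; exact hs⟩
      have h1 : s ∈ LTLfSynthAux.iter (sysStInner δ Acc α (SysSt δ Acc α)) (rk s) :=
        Nat.sInf_mem hne
      refine ⟨h1, ?_⟩
      rcases Nat.eq_zero_or_pos (rk s) with h0 | hpos
      · rw [h0] at h1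
        simp only [LTLfSynthAux.iter] at h1
        exact absurd h1 (Set.notMem_empty s)
      · exact hpos
    have hstep : ∀ s X, ∃ Y, s ∈ SysSt δ Acc α →
        (¬ α.eval X ∨ δ s (combine X Y) ∈
            LTLfSynthAux.iter (sysStInner δ Acc α (SysSt δ Acc α)) (rk s - 1) ∪ Acc) ∧
          δ s (combine X Y) ∈ SysSt δ Acc α ∪ Acc := by
      intro s X
      by_cases hs : s ∈ SysSt δ Acc α
      · obtain ⟨h1, h2⟩ := hmemIter s hs
        rw [show rk s = (rk s - 1) + 1 from (Nat.sub_add_cancel h2).symm,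
          LTLfSynthAux.iter_inner_succ] at h1
        obtain ⟨Y, hY⟩ := h1 X
        exact ⟨Y, fun _ => hY⟩
      · exact ⟨∅, fun h => absurd h hs⟩
    choose ω hω using hstep
    refine ⟨genStrategy δ ω s₀, ?_⟩
    rintro lam ⟨n, hn⟩
    have hps : ∀ j, playState δ (genStrategy δ ω s₀) s₀ lam j =
        (histList lam j).foldl (stepWith δ ω) s₀ :=
      LTLfSynthAux.playState_genStrategy δ ω s₀ lam
    set st : ℕ → S := fun j => (histList lam j).foldl (stepWith δ ω) s₀ with hstdef
    have hst0 : st 0 = s₀ := rfl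
    have hstS : ∀ j, st (j + 1) = δ (st j) (combine (lam j) (ω (st j) (lam j))) := by
      intro j
      rw [hstdef]
      simp only
      rw [LTLfSynthAux.histList_succ, List.foldl_append]
      rfl
    by_contra hcon
    push_neg at hcon
    have hnAcc : ∀ j, st j ∉ Acc := by
      intro j
      match j with
      | 0 => exact hst0 ▸ hs₀Acc
      | k + 1 =>
        intro hA
        exact hcon k ((hfin _ lam k).mpr (by rw [hps]; exact hA))
    have hIn : ∀ j, st j ∈ SysSt δ Acc α := by
      intro j
      induction j with
      | zero => exact hmem
      | succ j ih =>
        have h2 := (hω (st j) (lam j) ih).2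
        rw [← hstS j] at h2
        rcases h2 with h | h
        · exact h
        · exact absurd h (hnAcc (j + 1))
    have hdec : ∀ j, n ≤ j → rk (st (j + 1)) < rk (st j) := by
      intro j hj
      have h1 := (hω (st j) (lam j) (hIn j)).1
      rcases h1 with h | h
      · exact absurd (hn j hj) h
      · rw [← hstS j] at h
        rcases h with h | h
        · have hle : rk (st (j + 1)) ≤ rk (st j) - 1 := Nat.sInf_le h
          have hge1 := (hmemIter _ (hIn j)).2
          omega
        · exact absurd h (hnAcc (j + 1))
    have hbound : ∀ k, rk (st (n + k)) + k ≤ rk (st n) := by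
      intro k
      induction k with
      | zero => simp
      | succ k ih =>
        have hlt : rk (st (n + k + 1)) < rk (st (n + k)) :=
          hdec (n + k) (Nat.le_add_right n k)
        have heq : n + (k + 1) = n + k + 1 := by omega
        rw [heq]
        omega
    have hb := hbound (rk (st n))
    have hge1 := (hmemIter _ (hIn (n + rk (st n)))).2
    omega
end
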